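/- arXiv:2011.10403 — 7 statements merged into one kernel-verified Lean document; each statement's English description precedes it below -/
import Mathlib

section
/- For m ≥ n ≥ 1, the complete bridge graph B_{m,n} is a minimally connected prime graph if and only if either m ≥ n > 1, or m ∈ {1,2} and n = 1. -/
open SimpleGraph

def bridgeAdj (m n : ℕ) : (Fin m ⊕ Fin n) → (Fin m ⊕ Fin n) → Prop
  | Sum.inl i, Sum.inl j => i ≠ j
  | Sum.inr i, Sum.inr j => i ≠ j
  | Sum.inl i, Sum.inr j => i.val = 0 ∧ j.val = 0
  | Sum.inr i, Sum.inl j => i.val = 0 ∧ j.val = 0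

/-- The complete bridge graph `B_{m,n}`: two disjoint complete graphs on `m` and `n`
vertices respectively, joined by exactly one edge (the bridge). -/
def completeBridgeGraph (m n : ℕ) : SimpleGraph (Fin m ⊕ Fin n) where
  Adj := bridgeAdj m n
  symm := by
    constructor
    rintro (a | a) (b | b) h <;> simp_all [bridgeAdj] <;> tauto
  loopless := by
    constructor
    rintro (a | a) h <;> simp_all [bridgeAdj]

/-- A minimally connected prime graph (MCPG). -/
def IsMCPG {V : Type} [Fintype V] (Γ : SimpleGraph V) : Prop :=
  2 ≤ Fintype.card V ∧ Γ.Connected ∧ Γᶜ.CliqueFree 3 ∧ Γᶜ.Colorable 3 ∧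
    ∀ e ∈ Γ.edgeSet,
      ¬((Γ.deleteEdges {e}).Connected ∧ (Γ.deleteEdges {e})ᶜ.CliqueFree 3 ∧
        (Γ.deleteEdges {e})ᶜ.Colorable 3)

/-- A minimal prime graph (MPG). -/
def IsMPG {V : Type} [Fintype V] (Γ : SimpleGraph V) : Prop :=
  2 ≤ Fintype.card V ∧ Γ.Connected ∧ Γᶜ.CliqueFree 3 ∧ Γᶜ.Colorable 3 ∧
    ∀ e ∈ Γ.edgeSet,
      ¬((Γ.deleteEdges {e})ᶜ.CliqueFree 3 ∧ (Γ.deleteEdges {e})ᶜ.Colorable 3)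

/-- A possibly disconnected minimal prime graph (PDMPG). -/
def IsPDMPG {V : Type} [Fintype V] (Γ : SimpleGraph V) : Prop :=
  Γᶜ.CliqueFree 3 ∧ Γᶜ.Colorable 3 ∧
    ∀ e ∈ Γ.edgeSet,
      ¬((Γ.deleteEdges {e})ᶜ.CliqueFree 3 ∧ (Γ.deleteEdges {e})ᶜ.Colorable 3)

/-! The complement of `B_{m,n}` is the complete bipartite graph between the two cliques minus
the bridge; being bipartite, it is triangle-free and 3-colourable, and `B_{m,n}` is connected.
Deleting the bridge disconnects the graph. Deleting an edge `ij` inside one clique adds `ij` to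
the complement, where it forms a triangle with any vertex of the other clique that is not on
the bridge; such a vertex exists as soon as that clique has two vertices. This settles
`m ≥ n ≥ 2`. For `n = 1` there is no such vertex: if `m = 2`, deleting the only clique edge
isolates a vertex, while if `m ≥ 3`, deleting an edge `ab` at the bridge endpoint `a` keeps the
graph connected through a third vertex and the complement stays bipartite (give `a` the colour
of the vertex across the bridge), so `B_{m,1}` is not minimal. -/

namespace SimpleGraph

variable {V : Type*} {G : SimpleGraph V}

theorem Colorable.cliqueFree_three_and_colorable_three (h : G.Colorable 2) :
    G.CliqueFree 3 ∧ G.Colorable 3 :=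
  ⟨h.cliqueFree (by norm_num), h.mono (by norm_num)⟩

theorem not_cliqueFree_three_of_adj {a b c : V} (hab : G.Adj a b) (hac : G.Adj a c)
    (hbc : G.Adj b c) : ¬G.CliqueFree 3 := by
  classical
  exact (is3Clique_triple_iff.mpr ⟨hab, hac, hbc⟩).not_cliqueFree

theorem not_connected_of_forall_not_adj {v w : V} (hvw : v ≠ w) (hv : ∀ u, ¬G.Adj v u) :
    ¬G.Connected := fun hG ↦
  have : Nontrivial V := ⟨v, w, hvw⟩
  let ⟨u, hu⟩ := hG.preconnected.exists_adj_of_nontrivial v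
  hv u hu

theorem Connected.connected_deleteEdges_of_adj_of_adj (hG : G.Connected) {x y w : V}
    (hxw : G.Adj x w) (hwy : G.Adj w y) : (G.deleteEdges {s(x, y)}).Connected := by
  refine hG.connected_delete_edge_of_not_isBridge ?_
  rw [isBridge_iff, not_not]
  have hxw' : (G.deleteEdges {s(x, y)}).Adj x w := by simp [hxw, hxw.ne.symm, hwy.ne]
  have hwy' : (G.deleteEdges {s(x, y)}).Adj w y := by simp [hwy, hwy.ne, hxw.ne.symm]
  exact hxw'.reachable.trans hwy'.reachable

end SimpleGraph

section CompleteBridgeGraph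

variable {m n : ℕ}

@[simp] theorem completeBridgeGraph_adj_inl_inl {i j : Fin m} :
    (completeBridgeGraph m n).Adj (.inl i) (.inl j) ↔ i ≠ j := Iff.rfl

@[simp] theorem completeBridgeGraph_adj_inr_inr {i j : Fin n} :
    (completeBridgeGraph m n).Adj (.inr i) (.inr j) ↔ i ≠ j := Iff.rfl

@[simp] theorem completeBridgeGraph_adj_inl_inr {i : Fin m} {j : Fin n} :
    (completeBridgeGraph m n).Adj (.inl i) (.inr j) ↔ i.val = 0 ∧ j.val = 0 := Iff.rfl

@[simp] theorem completeBridgeGraph_adj_inr_inl {i : Fin n} {j : Fin m} :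
    (completeBridgeGraph m n).Adj (.inr i) (.inl j) ↔ i.val = 0 ∧ j.val = 0 := Iff.rfl

theorem completeBridgeGraph_eq_sum_sup_edge {i : Fin m} {j : Fin n} (hi : i.val = 0)
    (hj : j.val = 0) : completeBridgeGraph m n = (⊤ ⊕g ⊤) ⊔ edge (.inl i) (.inr j) := by
  ext (a | a) (b | b) <;> simp [edge_adj, Fin.ext_iff] <;> omega

theorem completeBridgeGraph_connected (hm : 0 < m) (hn : 0 < n) :
    (completeBridgeGraph m n).Connected := by
  have : Nonempty (Fin m) := ⟨⟨0, hm⟩⟩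
  have : Nonempty (Fin n) := ⟨⟨0, hn⟩⟩
  rw [completeBridgeGraph_eq_sum_sup_edge (i := ⟨0, hm⟩) (j := ⟨0, hn⟩) rfl rfl]
  exact connected_top.sum_sup_edge connected_top

theorem completeBridgeGraph_compl_colorable_two : (completeBridgeGraph m n)ᶜ.Colorable 2 :=
  ⟨Coloring.mk (Sum.elim (fun _ ↦ 0) (fun _ ↦ 1)) <| by
    rintro (i | i) (j | j) h <;> simp_all⟩

theorem not_connected_deleteEdges_bridge {i : Fin m} {j : Fin n} (hi : i.val = 0)
    (hj : j.val = 0) :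
    ¬((completeBridgeGraph m n).deleteEdges {s(.inl i, .inr j)}).Connected := by
  have : Nonempty (Fin m) := ⟨i⟩
  have : Nonempty (Fin n) := ⟨j⟩
  have hsum : (completeBridgeGraph m n).deleteEdges {s(.inl i, .inr j)} = ⊤ ⊕g ⊤ := by
    ext (a | a) (b | b) <;> simp [Fin.ext_iff] <;> omega
  exact hsum ▸ not_connected_sum

theorem not_cliqueFree_compl_deleteEdges_inl_inl (hn : 2 ≤ n) {i j : Fin m} (hij : i ≠ j) :
    ¬((completeBridgeGraph m n).deleteEdges {s(.inl i, .inl j)})ᶜ.CliqueFree 3 :=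
  not_cliqueFree_three_of_adj (a := .inl i) (b := .inl j) (c := .inr ⟨1, hn⟩)
    (by simp [hij]) (by simp) (by simp)

theorem not_cliqueFree_compl_deleteEdges_inr_inr (hm : 2 ≤ m) {i j : Fin n} (hij : i ≠ j) :
    ¬((completeBridgeGraph m n).deleteEdges {s(.inr i, .inr j)})ᶜ.CliqueFree 3 :=
  not_cliqueFree_three_of_adj (a := .inr i) (b := .inr j) (c := .inl ⟨1, hm⟩)
    (by simp [hij]) (by simp) (by simp)

theorem not_connected_deleteEdges_inl_inl_of_two_one {i j : Fin 2} (hij : i ≠ j) :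
    ¬((completeBridgeGraph 2 1).deleteEdges {s(.inl i, .inl j)}).Connected := by
  refine not_connected_of_forall_not_adj (v := .inl 1) (w := .inl 0) (by simp) ?_
  rintro (k | k) <;> fin_cases i <;> fin_cases j <;> fin_cases k <;> simp_all

theorem completeBridgeGraph_deleteEdges_not_connected_or_not_cliqueFree
    (h : (2 ≤ m ∧ 2 ≤ n) ∨ (m ≤ 2 ∧ n = 1)) :
    ∀ e ∈ (completeBridgeGraph m n).edgeSet,
      ¬((completeBridgeGraph m n).deleteEdges {e}).Connected ∨
        ¬((completeBridgeGraph m n).deleteEdges {e})ᶜ.CliqueFree 3 := by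
  refine Sym2.ind fun x y hxy ↦ ?_
  rw [mem_edgeSet] at hxy
  rcases x with i | i <;> rcases y with j | j
  · rw [completeBridgeGraph_adj_inl_inl] at hxy
    rcases h with ⟨-, hn⟩ | ⟨hm, rfl⟩
    · exact .inr (not_cliqueFree_compl_deleteEdges_inl_inl hn hxy)
    · obtain rfl : m = 2 := by
        have := Fin.val_ne_iff.mpr hxy
        omega
      exact .inl (not_connected_deleteEdges_inl_inl_of_two_one hxy)
  · exact .inl (not_connected_deleteEdges_bridge hxy.1 hxy.2)
  · rw [Sym2.eq_swap]
    exact .inl (not_connected_deleteEdges_bridge hxy.2 hxy.1)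
  · rw [completeBridgeGraph_adj_inr_inr] at hxy
    rcases h with ⟨hm, -⟩ | ⟨-, rfl⟩
    · exact .inr (not_cliqueFree_compl_deleteEdges_inr_inr hm hxy)
    · exact absurd (Subsingleton.elim i j) hxy

theorem completeBridgeGraph_compl_deleteEdges_colorable_two {i j : Fin m} (hi : i.val = 0) :
    ((completeBridgeGraph m 1).deleteEdges {s(.inl i, .inl j)})ᶜ.Colorable 2 :=
  ⟨Coloring.mk (Sum.elim (fun k ↦ if k = i then 0 else 1) (fun _ ↦ 0)) <| by
    rintro (k | k) (l | l) h <;> simp only [compl_adj, deleteEdges_adj] at h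
    · simp only [Sum.elim_inl]
      by_cases hk : k = i <;> by_cases hl : l = i <;> simp_all
    · simp only [Sum.elim_inl, Sum.elim_inr]
      by_cases hk : k = i <;> simp_all [Fin.ext_iff]
    · simp only [Sum.elim_inl, Sum.elim_inr]
      by_cases hl : l = i <;> simp_all [Fin.ext_iff]
    · exact (h.1 (congrArg _ (Subsingleton.elim k l))).elim⟩

theorem exists_edge_connected_deleteEdges_and_compl_colorable_two (hm : 3 ≤ m) :
    ∃ e ∈ (completeBridgeGraph m 1).edgeSet,
      ((completeBridgeGraph m 1).deleteEdges {e}).Connected ∧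
        ((completeBridgeGraph m 1).deleteEdges {e})ᶜ.Colorable 2 := by
  let a : Fin m := ⟨0, by omega⟩
  let b : Fin m := ⟨1, by omega⟩
  let c : Fin m := ⟨2, by omega⟩
  refine ⟨s(.inl a, .inl b), by simp [a, b], ?_,
    completeBridgeGraph_compl_deleteEdges_colorable_two rfl⟩
  exact (completeBridgeGraph_connected (by omega) one_pos).connected_deleteEdges_of_adj_of_adj
    (w := .inl c) (by simp [a, c]) (by simp [b, c])

end CompleteBridgeGraph

/-- For `m ≥ n ≥ 1`, the complete bridge graph `B_{m,n}` is a minimally connected prime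
graph if and only if either `m ≥ n > 1`, or `m ∈ {1,2}` and `n = 1`. -/
theorem stmt0 (m n : ℕ) (h1 : 1 ≤ n) (h2 : n ≤ m) :
    IsMCPG (completeBridgeGraph m n) ↔
      (n ≤ m ∧ 1 < n) ∨ ((m = 1 ∨ m = 2) ∧ n = 1) := by
  constructor
  · rintro ⟨-, -, -, -, hmin⟩
    by_contra hcase
    obtain ⟨rfl, hm⟩ : n = 1 ∧ 3 ≤ m := by omega
    obtain ⟨e, he, hconn, hcol⟩ := exists_edge_connected_deleteEdges_and_compl_colorable_two hm
    exact hmin e he ⟨hconn, hcol.cliqueFree_three_and_colorable_three⟩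
  · intro hcase
    obtain ⟨hcf, hcol⟩ := (completeBridgeGraph_compl_colorable_two (m := m) (n := n))
      |>.cliqueFree_three_and_colorable_three
    refine ⟨by simp only [Fintype.card_sum, Fintype.card_fin]; omega,
      completeBridgeGraph_connected (by omega) h1, hcf, hcol,
      fun e he ⟨hconn, hcf', _⟩ ↦ ?_⟩
    rcases completeBridgeGraph_deleteEdges_not_connected_or_not_cliqueFree (by omega) e he with
      h | h
    exacts [h hconn, h hcf']
end

section
/- If Γ is a minimally connected prime graph, then the diameter of Γ is at most 3. -/
open SimpleGraph

/-!
If `dist u v ≥ 4`, the vertex `w` two steps along a shortest `u`–`v` path is at distance `2`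
from `u` and at distance at least `2` from `v`. Then `u`, `w`, `v` are pairwise distinct and pairwise non-adjacent,
i.e. a triangle in the complement.
-/

namespace SimpleGraph

variable {V : Type*} {G : SimpleGraph V} {u v : V}

lemma compl_adj_of_one_lt_dist (h : 1 < G.dist u v) : Gᶜ.Adj u v := by
  refine (G.compl_adj u v).mpr ⟨?_, fun hadj ↦ ?_⟩
  · rintro rfl
    simp at h
  · rw [dist_eq_one_iff_adj.mpr hadj] at h
    exact lt_irrefl 1 h

lemma Reachable.exists_one_lt_dist_of_three_lt_dist (huv : G.Reachable u v)
    (h : 3 < G.dist u v) : ∃ w, 1 < G.dist u w ∧ 1 < G.dist w v := by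
  obtain ⟨p, hp⟩ := huv.exists_walk_length_eq_dist
  refine ⟨p.getVert 2, ?_⟩
  have hfront : G.dist u (p.getVert 2) ≤ 2 :=
    (G.dist_le (p.take 2)).trans ((p.take_length 2).trans_le (min_le_left _ _))
  have hback : G.dist (p.getVert 2) v ≤ G.dist u v - 2 := by
    simpa [hp] using G.dist_le (p.drop 2)
  have htri := (p.take 2).reachable.dist_triangle_left v
  omega

lemma Preconnected.dist_le_three_of_compl_cliqueFree (hG : G.Preconnected)
    (h : Gᶜ.CliqueFree 3) (u v : V) : G.dist u v ≤ 3 := by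
  classical
  by_contra! hfar
  obtain ⟨w, huw, hwv⟩ := (hG u v).exists_one_lt_dist_of_three_lt_dist hfar
  refine h {u, w, v} (is3Clique_triple_iff.mpr ⟨?_, ?_, ?_⟩)
  · exact compl_adj_of_one_lt_dist huw
  · exact compl_adj_of_one_lt_dist (by omega)
  · exact compl_adj_of_one_lt_dist hwv

lemma Connected.diam_le_three_of_compl_cliqueFree (hG : G.Connected)
    (h : Gᶜ.CliqueFree 3) : G.diam ≤ 3 := by
  have := hG.nonempty
  obtain ⟨u, v, huv⟩ := G.exists_dist_eq_diam
  exact huv ▸ hG.preconnected.dist_le_three_of_compl_cliqueFree h u v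

end SimpleGraph

/-- If `Γ` is a minimally connected prime graph, then its diameter is at most 3. -/
theorem stmt6 {V : Type} [Fintype V] (Γ : SimpleGraph V) (h : IsMCPG Γ) :
    Γ.diam ≤ 3 :=
  h.2.1.diam_le_three_of_compl_cliqueFree h.2.2.1
end

section
/- For m ≥ n ≥ 1, the number of Hamiltonian paths in the complete bridge graph B_{m,n}, where a path and its reverse are counted as the same path, is (m-1)!·(n-1)!. -/
/-!
The only edge between the two cliques of `B_{m,n}` is the bridge, so a Hamiltonian path crosses
it exactly once: it runs through one clique, ending at the bridge vertex there, crosses, and runs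
through the other clique starting at the other bridge vertex. Oriented from the `m`-clique to the
`n`-clique, such a path is an ordering of each clique with the bridge vertex at the junction,
which leaves `(m - 1)! * (n - 1)!` choices; the paths oriented the other way are their reversals.
-/

open SimpleGraph

open Equiv

instance {α β : Type*} : CanLift (α ⊕ β) α Sum.inl (·.isLeft) :=
  ⟨fun x h => ⟨x.getLeft h, x.inl_getLeft h⟩⟩

instance {α β : Type*} : CanLift (α ⊕ β) β Sum.inr (·.isRight) :=
  ⟨fun x h => ⟨x.getRight h, x.inr_getRight h⟩⟩

theorem List.head?_ofFn_of_neZero {α : Type*} {k : ℕ} [NeZero k] (f : Fin k → α) :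
    (List.ofFn f).head? = some (f 0) := by
  simp [List.head?_eq_getElem?, NeZero.ne k]

theorem List.getLast?_ofFn_of_neZero {α : Type*} {k : ℕ} [NeZero k] (f : Fin k → α) :
    (List.ofFn f).getLast? = some (f (Fin.rev 0)) := by
  simp [List.getLast?_eq_getElem?, Fin.rev, Nat.pos_of_neZero]

theorem List.exists_perm_eq_ofFn {k : ℕ} {L : List (Fin k)} (hnd : L.Nodup)
    (hall : ∀ a, a ∈ L) : ∃ σ : Equiv.Perm (Fin k), L = List.ofFn σ := by
  have hlen : L.length = k := by
    simpa using Fintype.card_congr (hnd.getEquivOfForallMemList L hall)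
  refine ⟨(finCongr hlen.symm).trans (hnd.getEquivOfForallMemList L hall), ?_⟩
  exact List.ext_getElem (by simp [hlen]) fun i _ _ => by
    simp [List.Nodup.getEquivOfForallMemList]

theorem Equiv.Perm.card_fixing {α : Type*} [Finite α] (a : α) :
    Nat.card {σ : Perm α // σ a = a} = (Nat.card α - 1).factorial := by
  classical
  have e : Perm {x // x ≠ a} ≃ {σ : Perm α // σ a = a} :=
    (Perm.subtypeEquivSubtypePerm _).trans (subtypeEquivRight fun σ => by simp)
  rw [← Nat.card_congr e, Nat.card_perm]
  have := Fintype.ofFinite α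
  simp [Nat.card_eq_fintype_card]

def quotFlipEquiv (α : Type*) : Quot (fun x y : Bool × α => y = (!x.1, x.2)) ≃ α where
  toFun := Quot.lift Prod.snd (by rintro x _ rfl; rfl)
  invFun a := Quot.mk _ (true, a)
  left_inv := by
    rintro ⟨⟨_ | _, a⟩⟩
    · exact Quot.sound rfl
    · rfl
  right_inv _ := rfl

namespace SimpleGraph

variable {V : Type*} {G : SimpleGraph V}

theorem Walk.sigma_eq_of_support_eq {x y : Σ a b, G.Walk a b}
    (h : x.2.2.support = y.2.2.support) : x = y := by
  obtain ⟨a, b, p⟩ := x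
  obtain ⟨c, d, q⟩ := y
  dsimp only at h
  obtain rfl : a = c := by rw [← p.head_support, ← q.head_support]; simp_rw [h]
  obtain rfl : b = d := by rw [← p.getLast_support, ← q.getLast_support]; simp_rw [h]
  rw [Walk.ext_support h]

def IsHamiltonianList (G : SimpleGraph V) (l : List V) : Prop :=
  l.IsChain G.Adj ∧ l.Nodup ∧ ∀ v, v ∈ l

theorem IsHamiltonianList.reverse {l : List V} (hl : G.IsHamiltonianList l) :
    G.IsHamiltonianList l.reverse :=
  ⟨List.isChain_reverse.mpr (hl.1.imp fun _ _ h => h.symm), List.nodup_reverse.mpr hl.2.1,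
    fun v => List.mem_reverse.mpr (hl.2.2 v)⟩

section HamiltonianWalk

variable [Nonempty V] [DecidableEq V]

def hamiltonianWalkEquiv :
    {x : Σ a b, G.Walk a b // x.2.2.IsHamiltonian} ≃ {l // G.IsHamiltonianList l} where
  toFun x := ⟨x.1.2.2.support, x.1.2.2.isChain_adj_support, x.2.isPath.support_nodup,
    x.2.mem_support⟩
  invFun l :=
    have hne : l.1 ≠ [] := List.ne_nil_of_mem (l.2.2.2 (Classical.arbitrary V))
    have hpath : (Walk.ofSupport l.1 hne l.2.1).IsPath := .mk' (by simpa using l.2.2.1)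
    ⟨⟨_, _, Walk.ofSupport l.1 hne l.2.1⟩, hpath.isHamiltonian_iff.mpr (by simpa using l.2.2.2)⟩
  left_inv x := Subtype.ext (Walk.sigma_eq_of_support_eq (Walk.support_ofSupport _ _))
  right_inv l := Subtype.ext (Walk.support_ofSupport _ _)

theorem hamiltonianWalkEquiv_eq_reverse_iff
    (x y : {x : Σ a b, G.Walk a b // x.2.2.IsHamiltonian}) :
    y.1 = ⟨x.1.2.1, x.1.1, x.1.2.2.reverse⟩ ↔
      (hamiltonianWalkEquiv y).1 = (hamiltonianWalkEquiv x).1.reverse := by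
  refine ⟨fun h => ?_, fun h => Walk.sigma_eq_of_support_eq ?_⟩
  · simp only [hamiltonianWalkEquiv, Equiv.coe_fn_mk]
    rw [h, Walk.support_reverse]
  · simpa [hamiltonianWalkEquiv, Walk.support_reverse] using h

theorem card_quot_reverse_hamiltonianWalk :
    Nat.card (Quot fun (p q : {x : Σ a b, G.Walk a b // x.2.2.IsHamiltonian}) =>
      q.1 = ⟨p.1.2.1, p.1.1, p.1.2.2.reverse⟩) =
    Nat.card (Quot fun l l' : {l // G.IsHamiltonianList l} => l'.1 = l.1.reverse) :=
  Nat.card_congr (Quot.congr hamiltonianWalkEquiv hamiltonianWalkEquiv_eq_reverse_iff)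

end HamiltonianWalk

/-- `hcross`: all edges between the sides `f ⁻¹' {true}` and `f ⁻¹' {false}` leave a given side
from the same vertex, as when a single edge joins the sides. -/
theorem exists_eq_append_of_isChain_of_nodup (f : V → Bool)
    (hcross : ∀ ⦃x y x' y'⦄, G.Adj x y → G.Adj x' y' → f x ≠ f y → f x' ≠ f y' →
      f x = f x' → x = x')
    {l : List V} (hl : l.IsChain G.Adj) (hnd : l.Nodup) :
    ∃ b A B, l = A ++ B ∧ (∀ x ∈ A, f x = b) ∧ ∀ y ∈ B, f y = !b := by
  induction l with
  | nil => exact ⟨true, [], [], rfl, by simp, by simp⟩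
  | cons v t ih =>
    obtain ⟨b, A, B, rfl, hA, hB⟩ := ih hl.tail hnd.of_cons
    by_cases hv : f v = b
    · exact ⟨b, v :: A, B, rfl, by simpa [hv] using hA, hB⟩
    replace hv : f v = !b := by simpa [Bool.eq_not] using hv
    rcases A with _ | ⟨a, A⟩
    · exact ⟨!b, v :: B, [], by simp, by simpa [hv] using hB, by simp⟩
    rcases B with _ | ⟨c, B⟩
    · exact ⟨!b, [v], a :: A, by simp, by simp [hv], by simpa using hA⟩
    exfalso
    -- the path would cross between the sides twice: at `v a` and where `A` meets `B`
    have hva : G.Adj v a := (List.isChain_cons_cons.mp hl).1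
    have hjunction : G.Adj ((a :: A).getLast (List.cons_ne_nil _ _)) c :=
      (List.isChain_append.mp hl.tail).2.2 _ (List.getLast?_eq_some_getLast _) _ rfl
    have hlast := hA _ (List.getLast_mem (List.cons_ne_nil a A))
    have hvc : v = c := hcross hva hjunction.symm (by simp [hv, hA])
      (by simp [hB, hlast]) (by simp [hv, hB])
    exact List.not_nodup_cons_of_mem (by simp [hvc]) hnd

end SimpleGraph

namespace completeBridgeGraph

variable {m n : ℕ}

theorem eq_of_adj_of_isLeft_ne ⦃x y x' y' : Fin m ⊕ Fin n⦄
    (h : (completeBridgeGraph m n).Adj x y) (h' : (completeBridgeGraph m n).Adj x' y')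
    (hxy : x.isLeft ≠ y.isLeft) (hxy' : x'.isLeft ≠ y'.isLeft)
    (hxx' : x.isLeft = x'.isLeft) : x = x' := by
  change bridgeAdj m n x y at h
  change bridgeAdj m n x' y' at h'
  rcases x with x | x <;> rcases y with y | y <;> rcases x' with x' | x' <;>
    rcases y' with y' | y' <;>
    simp only [bridgeAdj] at h h' <;> simp at hxy hxy' hxx' <;> simp [Fin.ext_iff] <;> omega

/-- The `m`-clique is run through backwards, so that the path reaches the bridge at `σ 0`. -/
def bridgeList (σ : Perm (Fin m)) (τ : Perm (Fin n)) : List (Fin m ⊕ Fin n) :=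
  ((List.ofFn σ).map .inl).reverse ++ (List.ofFn τ).map .inr

theorem bridgeList_injective :
    Function.Injective fun p : Perm (Fin m) × Perm (Fin n) => bridgeList p.1 p.2 := by
  rintro ⟨σ, τ⟩ ⟨σ', τ'⟩ h
  obtain ⟨hσ, hτ⟩ := List.append_inj h (by simp)
  simp only [List.map_ofFn, List.reverse_inj, List.ofFn_inj] at hσ hτ
  exact Prod.ext (DFunLike.coe_injective (Sum.inl_injective.comp_left hσ))
    (DFunLike.coe_injective (Sum.inr_injective.comp_left hτ))

theorem bridgeList_inj {σ σ' : Perm (Fin m)} {τ τ' : Perm (Fin n)} :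
    bridgeList σ τ = bridgeList σ' τ' ↔ σ = σ' ∧ τ = τ' :=
  bridgeList_injective.eq_iff.trans Prod.mk_inj

@[simp]
theorem head?_bridgeList [NeZero m] (σ : Perm (Fin m)) (τ : Perm (Fin n)) :
    (bridgeList σ τ).head? = some (.inl (σ (Fin.rev 0))) := by
  simp [bridgeList, List.getLast?_ofFn_of_neZero]

@[simp]
theorem getLast?_bridgeList [NeZero n] (σ : Perm (Fin m)) (τ : Perm (Fin n)) :
    (bridgeList σ τ).getLast? = some (.inr (τ (Fin.rev 0))) := by
  simp [bridgeList, List.getLast?_ofFn_of_neZero]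

variable [NeZero m] [NeZero n]

theorem bridgeList_ne_reverse (σ σ' : Perm (Fin m)) (τ τ' : Perm (Fin n)) :
    bridgeList σ τ ≠ (bridgeList σ' τ').reverse := by
  intro h
  simpa [List.head?_reverse] using congrArg List.head? h

theorem adj_inl_inr {i : Fin m} {j : Fin n} :
    (completeBridgeGraph m n).Adj (.inl i) (.inr j) ↔ i = 0 ∧ j = 0 := by
  show _ ∧ _ ↔ _
  simp only [Fin.ext_iff, Fin.val_zero]

theorem isHamiltonianList_bridgeList {σ : Perm (Fin m)} {τ : Perm (Fin n)} (hσ : σ 0 = 0)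
    (hτ : τ 0 = 0) : (completeBridgeGraph m n).IsHamiltonianList (bridgeList σ τ) := by
  refine ⟨List.isChain_append.mpr ⟨?_, ?_, ?_⟩, ?_, ?_⟩
  · rw [List.isChain_reverse, List.isChain_map]
    exact (List.Pairwise.isChain (List.nodup_ofFn.mpr σ.injective)).imp fun _ _ h => Ne.symm h
  · rw [List.isChain_map]
    exact List.Pairwise.isChain (List.nodup_ofFn.mpr τ.injective)
  · simp [List.head?_ofFn_of_neZero, hσ, hτ, adj_inl_inr]
  · simp [bridgeList, List.nodup_append, List.nodup_ofFn, Sum.inl_injective, Sum.inr_injective,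
      σ.injective, τ.injective]
  · rintro (i | j) <;>
      simp only [bridgeList, List.mem_append, List.mem_reverse, List.mem_map, List.mem_ofFn] <;>
      simp [σ.surjective _, τ.surjective _]

theorem exists_bridgeList_of_isLeft_of_isRight {A B : List (Fin m ⊕ Fin n)}
    (hl : (completeBridgeGraph m n).IsHamiltonianList (A ++ B))
    (hA : ∀ x ∈ A, x.isLeft) (hB : ∀ y ∈ B, y.isRight) :
    ∃ σ τ, σ 0 = 0 ∧ τ 0 = 0 ∧ A ++ B = bridgeList σ τ := by
  lift A to List (Fin m) using hA
  lift B to List (Fin n) using hB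
  obtain ⟨hchain, hnd, hall⟩ := hl
  obtain ⟨hndA, hndB, -⟩ := List.nodup_append.mp hnd
  obtain ⟨σ, hσ⟩ := List.exists_perm_eq_ofFn (List.nodup_reverse.mpr (hndA.of_map _))
    fun i => by simpa using hall (.inl i)
  obtain ⟨τ, rfl⟩ := List.exists_perm_eq_ofFn (hndB.of_map _) fun j => by simpa using hall (.inr j)
  obtain rfl := List.reverse_eq_iff.mp hσ
  have hjunction := (List.isChain_append.mp hchain).2.2
  simp [List.head?_ofFn_of_neZero, adj_inl_inr] at hjunction
  exact ⟨σ, τ, hjunction.1, hjunction.2, by simp [bridgeList]⟩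

theorem exists_bridgeList {l : List (Fin m ⊕ Fin n)}
    (hl : (completeBridgeGraph m n).IsHamiltonianList l) :
    ∃ σ τ, σ 0 = 0 ∧ τ 0 = 0 ∧ (l = bridgeList σ τ ∨ l.reverse = bridgeList σ τ) := by
  obtain ⟨b, A, B, rfl, hA, hB⟩ :=
    exists_eq_append_of_isChain_of_nodup Sum.isLeft eq_of_adj_of_isLeft_ne hl.1 hl.2.1
  cases b
  · obtain ⟨σ, τ, hσ, hτ, h⟩ := exists_bridgeList_of_isLeft_of_isRight
      (A := B.reverse) (B := A.reverse) (by simpa using hl.reverse) (by simpa using hB)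
      (by simpa using hA)
    exact ⟨σ, τ, hσ, hτ, .inr (by simpa using h)⟩
  · obtain ⟨σ, τ, hσ, hτ, h⟩ := exists_bridgeList_of_isLeft_of_isRight hl hA (by simpa using hB)
    exact ⟨σ, τ, hσ, hτ, .inl h⟩

def orientedBridgeList
    (x : Bool × ({σ : Perm (Fin m) // σ 0 = 0} × {τ : Perm (Fin n) // τ 0 = 0})) :
    {l // (completeBridgeGraph m n).IsHamiltonianList l} :=
  have hl := isHamiltonianList_bridgeList x.2.1.2 x.2.2.2
  cond x.1 ⟨_, hl⟩ ⟨_, hl.reverse⟩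

theorem orientedBridgeList_not (b : Bool)
    (p : {σ : Perm (Fin m) // σ 0 = 0} × {τ : Perm (Fin n) // τ 0 = 0}) :
    (orientedBridgeList (!b, p)).1 = (orientedBridgeList (b, p)).1.reverse := by
  cases b <;> simp [orientedBridgeList]

theorem orientedBridgeList_bijective :
    Function.Bijective (orientedBridgeList (m := m) (n := n)) := by
  refine ⟨?_, ?_⟩
  · rintro ⟨_ | _, ⟨σ, hσ⟩, ⟨τ, hτ⟩⟩ ⟨_ | _, ⟨σ', hσ'⟩, ⟨τ', hτ'⟩⟩ h <;>
      have h := congrArg Subtype.val h <;>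
      simp only [orientedBridgeList, cond_true, cond_false, List.reverse_inj] at h
    · obtain ⟨rfl, rfl⟩ := bridgeList_inj.mp h
      rfl
    · exact absurd h.symm (bridgeList_ne_reverse _ _ _ _)
    · exact absurd h (bridgeList_ne_reverse _ _ _ _)
    · obtain ⟨rfl, rfl⟩ := bridgeList_inj.mp h
      rfl
  · rintro ⟨l, hl⟩
    obtain ⟨σ, τ, hσ, hτ, rfl | h⟩ := exists_bridgeList hl
    · exact ⟨(true, ⟨σ, hσ⟩, ⟨τ, hτ⟩), rfl⟩
    · exact ⟨(false, ⟨σ, hσ⟩, ⟨τ, hτ⟩), Subtype.ext (by simp [orientedBridgeList, ← h])⟩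

theorem card_quot_reverse_isHamiltonianList :
    Nat.card (Quot fun l l' : {l // (completeBridgeGraph m n).IsHamiltonianList l} =>
      l'.1 = l.1.reverse) = (m - 1).factorial * (n - 1).factorial := by
  let e := Equiv.ofBijective _ (orientedBridgeList_bijective (m := m) (n := n))
  have hflip : ∀ x y, y = (!x.1, x.2) ↔ (e y).1 = (e x).1.reverse := by
    refine fun x y => ⟨?_, fun h => e.injective (Subtype.ext ?_)⟩
    · rintro rfl
      exact orientedBridgeList_not x.1 x.2
    · rw [h]
      exact (orientedBridgeList_not x.1 x.2).symm
  rw [← Nat.card_congr (Quot.congr e hflip), Nat.card_congr (quotFlipEquiv _), Nat.card_prod,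
    Perm.card_fixing, Perm.card_fixing, Nat.card_fin, Nat.card_fin]

end completeBridgeGraph

/-- For `m ≥ n ≥ 1`, the number of Hamiltonian paths in `B_{m,n}`, identifying each path
with its reverse, is `(m-1)! * (n-1)!`. -/
theorem stmt10 (m n : ℕ) (h1 : 1 ≤ n) (h2 : n ≤ m) :
    Nat.card (Quot (fun
        (p q : {x : Σ a b : Fin m ⊕ Fin n, (completeBridgeGraph m n).Walk a b //
          x.2.2.IsHamiltonian}) =>
      q.val = ⟨p.val.2.1, p.val.1, p.val.2.2.reverse⟩)) =
    Nat.factorial (m - 1) * Nat.factorial (n - 1) := by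
  have : NeZero n := ⟨by omega⟩
  have : NeZero m := ⟨by omega⟩
  rw [card_quot_reverse_hamiltonianWalk, completeBridgeGraph.card_quot_reverse_isHamiltonianList]
end

section
/- Every minimal prime graph is Hamiltonian, i.e., contains a cycle passing through every vertex exactly once. -/
open SimpleGraph

/-!
Write `H = Γᶜ`. Minimality makes `H` non-bipartite: given a bipartition `(s, sᶜ)` of `H`, some
edge of the connected graph `Γ` crosses it (or `H` has no edges and any edge of `Γ` will do), and
deleting that edge from `Γ` keeps `H` bipartite, hence triangle-free and 3-colourable. So `Γ` is
connected, has independence number at most 2, and is not the union of two cliques.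

Let `u ⋯ v` be a longest path. A vertex off it would be non-adjacent to both ends, forcing `u ~ v`;
the path then closes to a cycle, which an edge leaving it extends to a longer path. So the path is
Hamiltonian. It closes to a Hamiltonian cycle if `u ~ v`, or, by Pósa rotation, if `v ~ pᵢ` and
`u ~ pᵢ₊₁` for some `i`. Otherwise every inner vertex is adjacent to `u` or `v`, and sweeping along
the path shows that `u, v` have at most one common neighbour `w`. The non-neighbours of `v` and of
`u` form cliques `K₁ ∋ u` and `K₂ ∋ v` covering all vertices but `w`, which must exist. If an edge
`a b` joins `K₁` to `K₂`, then `w u ⋯ a b ⋯ v w` is a Hamiltonian cycle; if not, `w` is adjacent to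
all of `K₁` or all of `K₂`, and `V` is the union of two cliques.
-/

namespace Nat

theorem exists_step_of_forall_or {P Q : ℕ → Prop} {i j : ℕ} (hij : i < j) (hi : P i) (hj : Q j)
    (h : ∀ k, i < k → k < j → P k ∨ Q k) : ∃ k, i ≤ k ∧ k < j ∧ P k ∧ Q (k + 1) := by
  induction j, hij using Nat.le_induction with
  | base => exact ⟨i, le_rfl, lt_add_one i, hi, hj⟩
  | succ j hij ih =>
    by_cases hQ : Q j
    · obtain ⟨k, hik, hkj, hPk, hQk⟩ := ih hQ fun k hik hkj ↦ h k hik (by omega)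
      exact ⟨k, hik, by omega, hPk, hQk⟩
    · exact ⟨j, by omega, lt_add_one j, (h j hij (lt_add_one j)).resolve_right hQ, hj⟩

end Nat

namespace SimpleGraph

variable {V : Type*} {G : SimpleGraph V}

theorem adj_or_adj_or_adj_of_cliqueFree_compl (htri : Gᶜ.CliqueFree 3) {x y z : V}
    (hxy : x ≠ y) (hxz : x ≠ z) (hyz : y ≠ z) : G.Adj x y ∨ G.Adj x z ∨ G.Adj y z := by
  classical
  by_contra! hn
  exact htri {x, y, z} (is3Clique_triple_iff.2 ⟨⟨hxy, hn.1⟩, ⟨hxz, hn.2.1⟩, ⟨hyz, hn.2.2⟩⟩)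

theorem isClique_neighborSet_compl (htri : Gᶜ.CliqueFree 3) (v : V) :
    G.IsClique (Gᶜ.neighborSet v) :=
  (isIndepSet_compl G).1 (isIndepSet_neighborSet_of_triangleFree _ htri v)

theorem isBipartite_compl_of_isClique {s t : Set V} (hs : G.IsClique s) (ht : G.IsClique t)
    (hst : sᶜ ⊆ t) : Gᶜ.IsBipartite := by
  refine IsBipartiteWith.isBipartite (s := s) (t := sᶜ) ⟨disjoint_compl_right, fun a b hab ↦ ?_⟩
  rw [compl_adj] at hab
  by_cases ha : a ∈ s <;> by_cases hb : b ∈ s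
  · exact absurd (hs ha hb hab.1) hab.2
  · exact .inl ⟨ha, hb⟩
  · exact .inr ⟨ha, hb⟩
  · exact absurd (ht (hst ha) (hst hb) hab.1) hab.2

theorem isBipartite_compl_of_isClique_of_isClique (htri : Gᶜ.CliqueFree 3) {s t : Set V}
    (hs : G.IsClique s) (ht : G.IsClique t) (hst : Disjoint s t) {w : V} (hw : (s ∪ t)ᶜ = {w})
    (hnadj : ∀ a ∈ s, ∀ b ∈ t, ¬G.Adj a b) : Gᶜ.IsBipartite := by
  have hws : w ∉ s ∪ t := by rw [← Set.mem_compl_iff, hw]; rfl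
  have houtside : ∀ x, x ∉ s → x ∉ t → x = w := fun x hxs hxt ↦ by
    rw [← Set.mem_singleton_iff, ← hw]
    rintro (h | h)
    exacts [hxs h, hxt h]
  have : (∀ a ∈ s, G.Adj w a) ∨ ∀ b ∈ t, G.Adj w b := by
    by_contra! ⟨⟨a, ha, hwa⟩, b, hb, hwb⟩
    have hwa' : w ≠ a := fun h ↦ hws (.inl (h ▸ ha))
    have hwb' : w ≠ b := fun h ↦ hws (.inr (h ▸ hb))
    rcases adj_or_adj_or_adj_of_cliqueFree_compl htri hwa' hwb' (hst.ne_of_mem ha hb)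
      with h | h | h
    exacts [hwa h, hwb h, hnadj a ha b hb h]
  rcases this with hws' | hwt
  · refine isBipartite_compl_of_isClique (hs.insert fun a ha _ ↦ hws' a ha) ht
      fun x hx ↦ by_contra fun hxt ↦ ?_
    exact hx (.inl (houtside x (fun h ↦ hx (.inr h)) hxt))
  · refine isBipartite_compl_of_isClique hs (ht.insert fun b hb _ ↦ hwt b hb) fun x hx ↦ ?_
    by_cases hxt : x ∈ t
    exacts [.inr hxt, .inl (houtside x hx hxt)]

theorem IsBipartiteWith.compl_deleteEdges {s : Set V} (hs : Gᶜ.IsBipartiteWith s sᶜ) {x y : V}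
    (hx : x ∈ s) (hy : y ∉ s) : (G.deleteEdges {s(x, y)})ᶜ.IsBipartiteWith s sᶜ := by
  refine ⟨disjoint_compl_right, fun a b hab ↦ ?_⟩
  rw [compl_adj, deleteEdges_adj, Set.mem_singleton_iff] at hab
  by_cases he : s(a, b) = s(x, y)
  · rcases Sym2.eq_iff.1 he with ⟨rfl, rfl⟩ | ⟨rfl, rfl⟩
    exacts [.inl ⟨hx, hy⟩, .inr ⟨hy, hx⟩]
  · exact hs.mem_of_adj ⟨hab.1, fun h ↦ hab.2 ⟨h, he⟩⟩

theorem IsClique.exists_isPath {s : Set V} (hs : G.IsClique s) (hfin : s.Finite) {a b : V}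
    (ha : a ∈ s) (hb : b ∈ s) (hab : a ≠ b) :
    ∃ p : G.Walk a b, p.IsPath ∧ ∀ x, x ∈ p.support ↔ x ∈ s := by
  classical
  obtain ⟨m, hmnd, hm⟩ : ∃ m : List V, m.Nodup ∧ ∀ x, x ∈ m ↔ x ≠ b ∧ x ≠ a ∧ x ∈ s :=
    ⟨((hfin.toFinset.erase a).erase b).toList, Finset.nodup_toList _, by simp⟩
  have hmem : ∀ x, x ∈ a :: (m ++ [b]) ↔ x ∈ s := by grind
  have hnd : (a :: (m ++ [b])).Nodup := by grind [List.nodup_cons, List.nodup_append]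
  have hchain : (a :: (m ++ [b])).IsChain G.Adj :=
    (hnd.imp_of_mem fun hx hy hne ↦ hs ((hmem _).1 hx) ((hmem _).1 hy) hne).isChain
  refine ⟨(Walk.ofSupport _ (List.cons_ne_nil _ _) hchain).copy (List.head_cons ..) (by simp),
    ?_, ?_⟩
  · rw [Walk.isPath_def, Walk.support_copy, Walk.support_ofSupport]
    exact hnd
  · rwa [Walk.support_copy, Walk.support_ofSupport]

namespace Walk

variable {u v : V}

theorem exists_isPath_forall_length_le [Fintype V] [Nonempty V] (G : SimpleGraph V) :
    ∃ (u v : V) (p : G.Walk u v), p.IsPath ∧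
      ∀ (u' v' : V) (q : G.Walk u' v'), q.IsPath → q.length ≤ p.length := by
  let S : Set ℕ := {n | ∃ (u v : V) (p : G.Walk u v), p.IsPath ∧ p.length = n}
  have hbdd : BddAbove S :=
    bddAbove_def.2 ⟨Fintype.card V, by rintro _ ⟨u, v, p, hp, rfl⟩; exact hp.length_lt.le⟩
  obtain ⟨u, v, p, hp, hlen⟩ :=
    Nat.sSup_mem (s := S) ⟨0, Classical.arbitrary V, _, nil, IsPath.nil, rfl⟩ hbdd
  exact ⟨u, v, p, hp, fun u' v' q hq ↦ hlen ▸ le_csSup hbdd ⟨u', v', q, hq, rfl⟩⟩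

variable [DecidableEq V]

theorem IsCycle.exists_isPath_length_eq {a x y : V} {c : G.Walk a a} (hc : c.IsCycle)
    (hx : x ∈ c.support) (hy : y ∉ c.support) (hyx : G.Adj y x) :
    ∃ (b : V) (q : G.Walk y b), q.IsPath ∧ q.length = c.length := by
  have hc' := hc.rotate hx
  refine ⟨_, cons hyx (c.rotate x hx).tail.reverse, hc'.isPath_tail.reverse.cons ?_, ?_⟩
  · rw [support_reverse, List.mem_reverse]
    refine fun h ↦ hy ((mem_support_rotate_iff c x hx).1 ?_)
    exact cons_support_tail hc'.not_nil ▸ List.mem_cons_of_mem _ h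
  · rw [length_cons, length_reverse, length_tail_add_one hc'.not_nil, length_rotate]

variable {p : G.Walk u v}

theorem IsHamiltonian.isHamiltonian_of_adj [Fintype V] (hp : p.IsHamiltonian) (hvu : G.Adj v u)
    (hcard : 3 ≤ Fintype.card V) : G.IsHamiltonian := fun _ ↦ by
  refine ⟨v, cons hvu p, ?_⟩
  rw [isHamiltonianCycle_iff_isCycle_and_length_eq, isCycle_iff_isPath_tail_and_le_length]
  simp only [tail_cons, length_cons, hp.length_eq]
  exact ⟨⟨(isPath_copy _ _ _).2 hp.isPath, by omega⟩, by omega⟩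

theorem IsHamiltonian.isHamiltonian_of_adj_getVert [Fintype V] (hp : p.IsHamiltonian) {i : ℕ}
    (hi : i < p.length) (hv : G.Adj v (p.getVert i)) (hu : G.Adj u (p.getVert (i + 1)))
    (hcard : 3 ≤ Fintype.card V) : G.IsHamiltonian := by
  let q : G.Walk u (p.getVert (i + 1)) :=
    (p.take i).append (cons hv.symm (p.drop (i + 1)).reverse)
  have hq : q.support.Perm p.support := by
    rw [support_append, support_cons, List.tail_cons, support_reverse, support_take,
      drop_support_eq_support_drop_min, min_eq_left hi]
    conv_rhs => rw [← List.take_append_drop (i + 1) p.support]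
    exact (List.reverse_perm _).append_left _
  exact IsHamiltonian.isHamiltonian_of_adj (fun x ↦ (hq.count_eq x).trans (hp x)) hu.symm hcard

theorem IsPath.isHamiltonian_of_forall_length_le (hconn : G.Connected)
    (htri : Gᶜ.CliqueFree 3) (hp : p.IsPath)
    (hmax : ∀ (u' v' : V) (q : G.Walk u' v'), q.IsPath → q.length ≤ p.length) :
    p.IsHamiltonian := by
  have hu : ∀ z, G.Adj u z → z ∈ p.support := fun z hz ↦ by
    by_contra hz'
    have := hmax _ _ _ (hp.cons hz' (h := hz.symm))
    simp at this
  have hv : ∀ z, G.Adj v z → z ∈ p.support := fun z hz ↦ by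
    by_contra hz'
    have := hmax _ _ _ (hp.reverse.cons (by simpa using hz') (h := hz.symm))
    simp at this
  refine hp.isHamiltonian_of_mem fun y ↦ by_contra fun hy ↦ ?_
  obtain ⟨⟨⟨x, z⟩, hxz⟩, -, hx, hz⟩ :=
    (hconn.preconnected u y).some.exists_boundary_dart {w | w ∈ p.support} p.start_mem_support hy
  simp only [Set.mem_ofPred_eq] at hx hz hxz
  have hzu : z ≠ u := (ne_of_mem_of_not_mem p.start_mem_support hz).symm
  have hzv : z ≠ v := (ne_of_mem_of_not_mem p.end_mem_support hz).symm
  obtain ⟨i, rfl, hi⟩ := mem_support_iff_exists_getVert.1 hx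
  have hi0 : i ≠ 0 := by rintro rfl; exact hz (hu z (by simpa using hxz))
  have hin : i ≠ p.length := by rintro rfl; exact hz (hv z (by simpa using hxz))
  have huv : u ≠ v := fun h ↦ hi0 (by
    have := (hp.getVert_eq_start_iff le_rfl).1 (by rw [getVert_length, h])
    omega)
  have hvu : G.Adj v u := by
    rcases adj_or_adj_or_adj_of_cliqueFree_compl htri hzu hzv huv with h | h | h
    exacts [absurd (hu z h.symm) hz, absurd (hv z h.symm) hz, h.symm]
  have hc : (cons hvu p).IsCycle := by
    rw [isCycle_iff_isPath_tail_and_le_length]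
    simp only [tail_cons, length_cons]
    exact ⟨(isPath_copy _ _ _).2 hp, by omega⟩
  obtain ⟨_, q, hq, hlen⟩ :=
    hc.exists_isPath_length_eq (by simp [hx]) (by simpa [hz] using hzv) hxz.symm
  have := hmax _ _ q hq
  simp [hlen] at this

theorem IsHamiltonian.exists_adj_getVert_of_commonNeighbors (hp : p.IsHamiltonian)
    (htri : Gᶜ.CliqueFree 3) (huv : Gᶜ.Adj u v) {w₁ w₂ : V} (hw₁ : w₁ ∈ G.commonNeighbors u v)
    (hw₂ : w₂ ∈ G.commonNeighbors u v) (hne : w₁ ≠ w₂) :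
    ∃ i < p.length, G.Adj v (p.getVert i) ∧ G.Adj u (p.getVert (i + 1)) := by
  have hcov : ∀ k, 0 < k → k < p.length → G.Adj v (p.getVert k) ∨ G.Adj u (p.getVert k) := by
    intro k hk0 hk
    have hku : p.getVert k ≠ u := (hp.isPath.getVert_eq_start_iff hk.le).not.2 hk0.ne'
    have hkv : p.getVert k ≠ v := (hp.isPath.getVert_eq_end_iff hk.le).not.2 hk.ne
    rcases adj_or_adj_or_adj_of_cliqueFree_compl htri huv.ne hku.symm hkv.symm with h | h | h
    exacts [absurd h ((compl_adj G u v).1 huv).2, .inr h, .inl h]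
  obtain ⟨i, rfl, hi⟩ := mem_support_iff_exists_getVert.1 (hp.mem_support w₁)
  obtain ⟨j, rfl, hj⟩ := mem_support_iff_exists_getVert.1 (hp.mem_support w₂)
  wlog hij : i < j generalizing i j
  · exact this j hj hw₂ i hi hw₁ hne.symm
      (lt_of_le_of_ne (not_lt.1 hij) fun h ↦ hne (h ▸ rfl))
  obtain ⟨k, -, hkj, hvk, huk⟩ := Nat.exists_step_of_forall_or hij
    (G.mem_commonNeighbors.1 hw₁).2 (G.mem_commonNeighbors.1 hw₂).1
    fun k hik hkj ↦ hcov k (by omega) (by omega)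
  exact ⟨k, by omega, hvk, huk⟩

end Walk

variable [Fintype V] [DecidableEq V]

theorem isHamiltonian_of_isClique_of_isClique {s t : Set V} (hs : G.IsClique s)
    (ht : G.IsClique t) (hst : Disjoint s t) {w u a b v : V} (hw : (s ∪ t)ᶜ = {w}) (hu : u ∈ s)
    (ha : a ∈ s) (hb : b ∈ t) (hv : v ∈ t) (hua : u ≠ a) (hbv : b ≠ v) (hwu : G.Adj w u)
    (hab : G.Adj a b) (hvw : G.Adj v w) (hcard : 3 ≤ Fintype.card V) : G.IsHamiltonian := by
  obtain ⟨pA, hpA, hA⟩ := hs.exists_isPath s.toFinite hu ha hua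
  obtain ⟨pB, hpB, hB⟩ := ht.exists_isPath t.toFinite hb hv hbv
  let q : G.Walk w v := .cons hwu (pA.append (.cons hab pB))
  have hsupp : q.support = w :: (pA.support ++ pB.support) := by
    simp only [q, Walk.support_cons, Walk.support_append, List.tail_cons]
  have hws : w ∉ s ∪ t := by rw [← Set.mem_compl_iff, hw]; rfl
  have hq : q.IsPath := by
    rw [Walk.isPath_def, hsupp, List.nodup_cons, List.nodup_append]
    refine ⟨by simpa [hA, hB] using hws, hpA.support_nodup, hpB.support_nodup, ?_⟩
    exact fun x hx y hy ↦ hst.ne_of_mem ((hA x).1 hx) ((hB y).1 hy)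
  refine (hq.isHamiltonian_of_mem fun x ↦ ?_).isHamiltonian_of_adj hvw hcard
  rw [hsupp, List.mem_cons, List.mem_append, hA, hB, ← Set.mem_union]
  by_cases hx : x ∈ s ∪ t
  · exact .inr hx
  · exact .inl (Set.mem_singleton_iff.1 (hw ▸ hx))

theorem isHamiltonian_of_subsingleton_commonNeighbors (htri : Gᶜ.CliqueFree 3)
    (hbip : ¬Gᶜ.IsBipartite) (hcard : 3 ≤ Fintype.card V) {u v : V} (huv : Gᶜ.Adj u v)
    (hsub : (G.commonNeighbors u v).Subsingleton) : G.IsHamiltonian := by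
  set K₁ := Gᶜ.neighborSet v
  set K₂ := Gᶜ.neighborSet u
  have hK₁ : G.IsClique K₁ := isClique_neighborSet_compl htri v
  have hK₂ : G.IsClique K₂ := isClique_neighborSet_compl htri u
  have hu : u ∈ K₁ := huv.symm
  have hv : v ∈ K₂ := huv
  have hdisj : Disjoint K₁ K₂ := Set.disjoint_left.2 fun x hx₁ hx₂ ↦ by
    rw [mem_neighborSet, compl_adj] at hx₁ hx₂
    rcases adj_or_adj_or_adj_of_cliqueFree_compl htri huv.ne hx₂.1 hx₁.1 with h | h | h
    exacts [((compl_adj G u v).1 huv).2 h, hx₂.2 h, hx₁.2 h]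
  have hcover : ∀ x, x ∉ K₁ ∪ K₂ → x ∈ G.commonNeighbors u v := by
    intro x hx
    rw [Set.mem_union, not_or] at hx
    have hxu : u ≠ x := fun h ↦ hx.1 (h ▸ hu)
    have hxv : v ≠ x := fun h ↦ hx.2 (h ▸ hv)
    refine G.mem_commonNeighbors.2 ⟨?_, ?_⟩ <;> by_contra h
    exacts [hx.2 ((compl_adj G u x).2 ⟨hxu, h⟩), hx.1 ((compl_adj G v x).2 ⟨hxv, h⟩)]
  obtain ⟨w, hw⟩ : (G.commonNeighbors u v).Nonempty := by
    by_contra! hempty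
    refine hbip (isBipartite_compl_of_isClique hK₁ hK₂ fun x hx ↦ by_contra fun hx₂ ↦ ?_)
    exact Set.eq_empty_iff_forall_notMem.1 hempty x
      (hcover x (by rintro (h | h); exacts [hx h, hx₂ h]))
  obtain ⟨hwu, hwv⟩ := G.mem_commonNeighbors.1 hw
  have hwK : w ∉ K₁ ∪ K₂ := by
    rintro (h | h)
    exacts [((compl_adj G v w).1 h).2 hwv, ((compl_adj G u w).1 h).2 hwu]
  have hK : (K₁ ∪ K₂)ᶜ = {w} := by
    ext x
    exact ⟨fun hx ↦ hsub (hcover x hx) hw, fun hx ↦ hx ▸ hwK⟩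
  by_cases hab : ∃ a ∈ K₁, ∃ b ∈ K₂, G.Adj a b
  · obtain ⟨a, ha, b, hb, hab⟩ := hab
    have hua : u ≠ a := by rintro rfl; exact ((compl_adj G _ b).1 hb).2 hab
    have hbv : b ≠ v := by rintro rfl; exact ((compl_adj G _ a).1 ha).2 hab.symm
    exact isHamiltonian_of_isClique_of_isClique hK₁ hK₂ hdisj hK hu ha hb hv hua hbv hwu.symm
      hab hwv hcard
  exact (hbip (isBipartite_compl_of_isClique_of_isClique htri hK₁ hK₂ hdisj hK
    fun a ha b hb h ↦ hab ⟨a, ha, b, hb, h⟩)).elim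

theorem Walk.IsHamiltonian.isHamiltonian_of_cliqueFree_compl {u v : V} {p : G.Walk u v}
    (hp : p.IsHamiltonian) (htri : Gᶜ.CliqueFree 3) (hbip : ¬Gᶜ.IsBipartite) :
    G.IsHamiltonian := by
  have hcard : 3 ≤ Fintype.card V := by
    by_contra! h
    exact hbip (Gᶜ.colorable_of_fintype.mono (by omega))
  by_cases hvu : G.Adj v u
  · exact hp.isHamiltonian_of_adj hvu hcard
  by_cases hcross : ∃ i < p.length, G.Adj v (p.getVert i) ∧ G.Adj u (p.getVert (i + 1))
  · obtain ⟨i, hi, hv, hu⟩ := hcross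
    exact hp.isHamiltonian_of_adj_getVert hi hv hu hcard
  have huv : Gᶜ.Adj u v := by
    refine (compl_adj G u v).2 ⟨fun h ↦ ?_, fun h ↦ hvu h.symm⟩
    have := (hp.isPath.getVert_eq_start_iff le_rfl).1 (by rw [getVert_length, h])
    have := hp.length_eq
    omega
  exact isHamiltonian_of_subsingleton_commonNeighbors htri hbip hcard huv fun w₁ hw₁ w₂ hw₂ ↦
    by_contra fun hne ↦ hcross (hp.exists_adj_getVert_of_commonNeighbors htri huv hw₁ hw₂ hne)

theorem isHamiltonian_of_cliqueFree_compl (hconn : G.Connected) (htri : Gᶜ.CliqueFree 3)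
    (hbip : ¬Gᶜ.IsBipartite) : G.IsHamiltonian := by
  have : Nonempty V := hconn.nonempty
  obtain ⟨u, v, p, hp, hmax⟩ := Walk.exists_isPath_forall_length_le G
  exact (hp.isHamiltonian_of_forall_length_le hconn htri hmax).isHamiltonian_of_cliqueFree_compl
    htri hbip

end SimpleGraph

theorem IsMPG.not_isBipartite_compl {V : Type} [Fintype V] {Γ : SimpleGraph V} (h : IsMPG Γ) :
    ¬Γᶜ.IsBipartite := by
  obtain ⟨hcard, hconn, -, -, hmin⟩ := h
  have key : ∀ (s : Set V) x y, Γᶜ.IsBipartiteWith s sᶜ → x ∈ s → y ∉ s → ¬Γ.Adj x y := by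
    intro s x y hs hx hy hxy
    have hbip := (hs.compl_deleteEdges hx hy).isBipartite
    exact hmin _ hxy ⟨hbip.cliqueFree (by norm_num), hbip.mono (by norm_num)⟩
  intro hbip
  obtain ⟨s, t, hst⟩ := hbip.exists_isBipartiteWith
  have hs : Γᶜ.IsBipartiteWith s sᶜ := ⟨disjoint_compl_right, fun a b hab ↦
    (hst.mem_of_adj hab).imp (fun h ↦ ⟨h.1, Set.disjoint_right.1 hst.disjoint h.2⟩)
      (fun h ↦ ⟨Set.disjoint_right.1 hst.disjoint h.1, h.2⟩)⟩
  by_cases hcross : ∃ x ∈ s, ∃ y ∉ s, Γ.Adj x y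
  · obtain ⟨x, hx, y, hy, hxy⟩ := hcross
    exact key s x y hs hx hy hxy
  have hbot : ∀ a b, ¬Γᶜ.Adj a b := by
    have hs' : ∀ a b, a ∈ s → b ∉ s → False := fun a b ha hb ↦ by
      obtain ⟨d, -, hd, hd'⟩ := (hconn.preconnected a b).some.exists_boundary_dart s ha hb
      exact hcross ⟨_, hd, _, hd', d.adj⟩
    intro a b hab
    rcases hs.mem_of_adj hab with ⟨ha, hb⟩ | ⟨ha, hb⟩
    exacts [hs' a b ha hb, hs' b a hb ha]
  obtain ⟨x, y, hxy⟩ := Fintype.exists_pair_of_one_lt_card hcard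
  refine key {x} x y ⟨disjoint_compl_right, fun a b hab ↦ (hbot a b hab).elim⟩ rfl hxy.symm ?_
  by_contra h
  exact hbot x y ((compl_adj Γ x y).2 ⟨hxy, h⟩)

/-- Every minimal prime graph is Hamiltonian. -/
theorem stmt11 {V : Type} [Fintype V] [DecidableEq V] (Γ : SimpleGraph V) (h : IsMPG Γ) :
    Γ.IsHamiltonian :=
  isHamiltonian_of_cliqueFree_compl h.2.1 h.2.2.1 h.not_isBipartite_compl
end

section
/- If Γ is a minimal prime graph that is self-complementary, then Γ is isomorphic to the cycle C_5 on five vertices. -/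
open SimpleGraph

/-!
Since `Γ ≃g Γᶜ` and `Γᶜ` is triangle-free, so is `Γ`. Three neighbours of a vertex would then
span a triangle of `Γᶜ`, so every vertex has at most two neighbours in `Γ` and two in `Γᶜ`, and
`|V| ≤ 5`. Self-complementarity also makes `Γ` contain exactly half of the `n.choose 2` pairs,
which rules out `n = 2, 3`.

For `n = 5` every vertex has exactly two neighbours and two non-neighbours, and this forces the
picture of a pentagon whose diagonals are the edges of `Γᶜ`, i.e. `Γ ≃g C₅`.
For `n = 4`, `Γ` is a spanning path `a - b - c - d`. Deleting its middle edge leaves the two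
cliques `{a, b}` and `{c, d}`, so the new complement is bipartite: still triangle-free and
3-colourable, which contradicts minimality.
-/

open Finset

namespace SimpleGraph

variable {V : Type*} {G : SimpleGraph V}

theorem CliqueFree.not_adj_of_adj_of_adj (hG : G.CliqueFree 3) {u v w : V}
    (hu : G.Adj v u) (hw : G.Adj v w) : ¬G.Adj u w := by
  classical
  exact fun huw ↦ hG {v, u, w} (is3Clique_triple_iff.mpr ⟨hu, hw, huw⟩)

theorem CliqueFree.compl_adj_of_adj_of_adj (hG : G.CliqueFree 3) {u v w : V}
    (hu : G.Adj v u) (hw : G.Adj v w) (huw : u ≠ w) : Gᶜ.Adj u w :=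
  (compl_adj G u w).mpr ⟨huw, hG.not_adj_of_adj_of_adj hu hw⟩

theorem CliqueFree.adj_of_compl_adj_of_compl_adj (hGc : Gᶜ.CliqueFree 3) {u v w : V}
    (hu : Gᶜ.Adj v u) (hw : Gᶜ.Adj v w) (huw : u ≠ w) : G.Adj u w := by
  by_contra h
  exact hGc.not_adj_of_adj_of_adj hu hw ((compl_adj G u w).mpr ⟨huw, h⟩)

theorem ne_of_adj_of_compl_adj {v x y : V} (hx : G.Adj v x) (hy : Gᶜ.Adj v y) : x ≠ y := by
  rintro rfl
  exact ((compl_adj G v x).mp hy).2 hx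

theorem compl_colorable_two_of_isClique {s t : Set V}
    (hs : G.IsClique s) (ht : G.IsClique t) (hst : ∀ v, v ∈ s ∨ v ∈ t) : Gᶜ.Colorable 2 := by
  classical
  refine ⟨Coloring.mk (fun v ↦ if v ∈ s then 0 else 1) fun {u v} huv ↦ ?_⟩
  obtain ⟨hne, hnadj⟩ := (compl_adj G u v).mp huv
  have hu := hst u
  have hv := hst v
  split_ifs with hus hvs hvs
  · exact absurd (hs hus hvs hne) hnadj
  · simp
  · simp
  · exact absurd (ht (hu.resolve_left hus) (hv.resolve_left hvs) hne) hnadj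

section Finite

variable [Fintype V]

theorem nonempty_iso_cycleGraph_five_of_pentagon (h5 : Fintype.card V = 5) (f : Fin 5 → V)
    (hadj : ∀ i, G.Adj (f i) (f (i + 1))) (hcadj : ∀ i, Gᶜ.Adj (f i) (f (i + 2))) :
    Nonempty (G ≃g cycleGraph 5) := by
  have hadj' : ∀ i, G.Adj (f i) (f (i + 4)) := fun i ↦ by
    simpa [add_assoc] using (hadj (i + 4)).symm
  have hcadj' : ∀ i, Gᶜ.Adj (f i) (f (i + 3)) := fun i ↦ by
    simpa [add_assoc] using (hcadj (i + 3)).symm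
  have hshift : ∀ i d, (G.Adj (f i) (f (i + d)) ↔ d = 1 ∨ d = 4) ∧ (d ≠ 0 → f i ≠ f (i + d)) := by
    intro i d
    fin_cases d
    · simp
    · simp [hadj i, (hadj i).ne]
    · simp [(compl_adj G _ _).mp (hcadj i)]
    · simp [(compl_adj G _ _).mp (hcadj' i)]
    · simp [hadj' i, (hadj' i).ne]
  have hcycle : ∀ i d : Fin 5, (cycleGraph 5).Adj i (i + d) ↔ d = 1 ∨ d = 4 := by
    intro i d
    simp only [cycleGraph_adj, sub_add_cancel_left, add_sub_cancel_left]
    fin_cases d <;> decide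
  have hinj : Function.Injective f := fun i j hij ↦ by
    by_contra hne
    simpa [hij] using (hshift i (j - i)).2 (sub_ne_zero.mpr (Ne.symm hne))
  have hbij : Function.Bijective f :=
    (Fintype.bijective_iff_injective_and_card f).mpr ⟨hinj, by simp [h5]⟩
  refine ⟨(RelIso.mk (Equiv.ofBijective f hbij) fun {i j} ↦ ?_).symm⟩
  obtain ⟨d, rfl⟩ : ∃ d, j = i + d := ⟨j - i, by abel⟩
  exact (hshift i d).1.trans (hcycle i d).symm

variable [DecidableEq V] [DecidableRel G.Adj]

theorem degree_le_two_of_cliqueFree (hG : G.CliqueFree 3) (hGc : Gᶜ.CliqueFree 3) (v : V) :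
    G.degree v ≤ 2 := by
  by_contra! h
  rw [← card_neighborFinset_eq_degree, two_lt_card] at h
  obtain ⟨a, ha, b, hb, c, hc, hab, hac, hbc⟩ := h
  rw [mem_neighborFinset] at ha hb hc
  exact hGc {a, b, c} (is3Clique_triple_iff.mpr ⟨hG.compl_adj_of_adj_of_adj ha hb hab,
    hG.compl_adj_of_adj_of_adj ha hc hac, hG.compl_adj_of_adj_of_adj hb hc hbc⟩)

theorem degree_compl_le_two_of_cliqueFree (hG : G.CliqueFree 3) (hGc : Gᶜ.CliqueFree 3)
    (v : V) : Gᶜ.degree v ≤ 2 :=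
  degree_le_two_of_cliqueFree hGc (by rwa [compl_compl]) v

theorem degree_add_degree_compl (v : V) : G.degree v + Gᶜ.degree v = Fintype.card V - 1 := by
  have := G.degree_lt_card_verts v
  rw [degree_compl]
  omega

theorem card_edgeFinset_add_card_edgeFinset_compl :
    #G.edgeFinset + #Gᶜ.edgeFinset = (Fintype.card V).choose 2 := by
  rw [← card_edgeFinset_top_eq_card_choose_two, ← card_union_of_disjoint
    (disjoint_edgeFinset.mpr disjoint_compl_right)]
  congr 1
  ext e
  rw [mem_union, mem_edgeFinset, mem_edgeFinset, mem_edgeFinset, ← Set.mem_union,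
    ← edgeSet_sup, sup_compl_eq_top]

theorem card_le_five_of_cliqueFree [Nonempty V] (hG : G.CliqueFree 3) (hGc : Gᶜ.CliqueFree 3) :
    Fintype.card V ≤ 5 := by
  obtain ⟨v⟩ := ‹Nonempty V›
  have := degree_add_degree_compl (G := G) v
  have := degree_le_two_of_cliqueFree hG hGc v
  have := degree_compl_le_two_of_cliqueFree hG hGc v
  omega

theorem exists_pentagon_of_cliqueFree (hG : G.CliqueFree 3) (hGc : Gᶜ.CliqueFree 3)
    (h5 : Fintype.card V = 5) :
    ∃ f : Fin 5 → V, (∀ i, G.Adj (f i) (f (i + 1))) ∧ ∀ i, Gᶜ.Adj (f i) (f (i + 2)) := by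
  have hdeg : ∀ v, G.degree v = 2 ∧ Gᶜ.degree v = 2 := fun v ↦ by
    have := degree_add_degree_compl (G := G) v
    have := degree_le_two_of_cliqueFree hG hGc v
    have := degree_compl_le_two_of_cliqueFree hG hGc v
    omega
  obtain ⟨v0⟩ : Nonempty V := Fintype.card_pos_iff.mp (by omega)
  obtain ⟨v1, v4, h14, hN⟩ :=
    card_eq_two.mp ((card_neighborFinset_eq_degree G v0).trans (hdeg v0).1)
  obtain ⟨x, y, hxy, hM⟩ :=
    card_eq_two.mp ((card_neighborFinset_eq_degree Gᶜ v0).trans (hdeg v0).2)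
  have h01 : G.Adj v0 v1 := by simp [← mem_neighborFinset, hN]
  have h04 : G.Adj v0 v4 := by simp [← mem_neighborFinset, hN]
  have h0x : Gᶜ.Adj v0 x := by simp [← mem_neighborFinset, hM]
  have h0y : Gᶜ.Adj v0 y := by simp [← mem_neighborFinset, hM]
  obtain ⟨w, hw, hw0⟩ := exists_mem_ne (s := G.neighborFinset v1)
    (by rw [card_neighborFinset_eq_degree, (hdeg v1).1]; omega) v0
  rw [mem_neighborFinset] at hw
  have h0w : Gᶜ.Adj v0 w := by
    refine (compl_adj G v0 w).mpr ⟨hw0.symm, fun h0w ↦ ?_⟩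
    rw [← mem_neighborFinset, hN, mem_insert, mem_singleton] at h0w
    rcases h0w with rfl | rfl
    exacts [hw.ne rfl, hG.not_adj_of_adj_of_adj h01 h04 hw]
  obtain ⟨v2, v3, h02, h03, h23, h12⟩ :
      ∃ v2 v3, Gᶜ.Adj v0 v2 ∧ Gᶜ.Adj v0 v3 ∧ v2 ≠ v3 ∧ G.Adj v1 v2 := by
    rw [← mem_neighborFinset, hM, mem_insert, mem_singleton] at h0w
    rcases h0w with rfl | rfl
    exacts [⟨w, y, h0x, h0y, hxy, hw⟩, ⟨w, x, h0y, h0x, hxy.symm, hw⟩]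
  have h23 : G.Adj v2 v3 := hGc.adj_of_compl_adj_of_compl_adj h02 h03 h23
  have h14 : Gᶜ.Adj v1 v4 := hG.compl_adj_of_adj_of_adj h01 h04 h14
  have h13 : Gᶜ.Adj v1 v3 :=
    hG.compl_adj_of_adj_of_adj h12.symm h23 (ne_of_adj_of_compl_adj h01 h03)
  have h34 : G.Adj v3 v4 :=
    hGc.adj_of_compl_adj_of_compl_adj h13 h14 (ne_of_adj_of_compl_adj h04 h03).symm
  have h24 : Gᶜ.Adj v2 v4 :=
    hG.compl_adj_of_adj_of_adj h23.symm h34 (ne_of_adj_of_compl_adj h04 h02).symm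
  refine ⟨![v0, v1, v2, v3, v4], fun i ↦ ?_, fun i ↦ ?_⟩ <;> fin_cases i
  exacts [h01, h12, h23, h34, h04.symm, h02, h13, h24, h03.symm, h14.symm]

end Finite

end SimpleGraph

theorem IsMPG.false_of_spanning_path {V : Type} [Fintype V] {Γ : SimpleGraph V} (hΓ : IsMPG Γ)
    {a b c d : V} (hab : Γ.Adj a b) (hbc : Γ.Adj b c) (hcd : Γ.Adj c d) (hac : a ≠ c)
    (hbd : b ≠ d) (hcover : ∀ v, v = a ∨ v = b ∨ v = c ∨ v = d) : False := by
  have hab' : (Γ.deleteEdges {s(b, c)}).Adj a b := by simp [hab, hac, hab.ne]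
  have hcd' : (Γ.deleteEdges {s(b, c)}).Adj c d := by simp [hcd, hcd.ne', hbd.symm]
  have hcol : (Γ.deleteEdges {s(b, c)})ᶜ.Colorable 2 :=
    compl_colorable_two_of_isClique (s := {a, b}) (t := {c, d})
      (isClique_pair.mpr fun _ ↦ hab') (isClique_pair.mpr fun _ ↦ hcd')
      (by simpa [or_assoc] using hcover)
  exact hΓ.2.2.2.2 s(b, c) hbc ⟨hcol.cliqueFree (by norm_num), hcol.mono (by norm_num)⟩

theorem IsMPG.false_of_card_eq_four {V : Type} [Fintype V] [DecidableEq V] {Γ : SimpleGraph V}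
    [DecidableRel Γ.Adj] (hΓ : IsMPG Γ) (hG : Γ.CliqueFree 3) (h4 : Fintype.card V = 4)
    (hE : #Γ.edgeFinset = 3) : False := by
  have hGc : Γᶜ.CliqueFree 3 := hΓ.2.2.1
  have hdeg := degree_le_two_of_cliqueFree hG hGc
  have hdegc := degree_compl_le_two_of_cliqueFree hG hGc
  obtain ⟨b, hb⟩ : ∃ b, Γ.degree b = 2 := by
    by_contra! h
    have : ∑ v, Γ.degree v ≤ ∑ _v : V, 1 := sum_le_sum fun v _ ↦ by
      have := hdeg v
      have := h v
      omega
    rw [sum_degrees_eq_twice_card_edges, hE, sum_const, card_univ, h4] at this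
    simp at this
  obtain ⟨a, c, hac, hN⟩ := card_eq_two.mp ((card_neighborFinset_eq_degree Γ b).trans hb)
  obtain ⟨d, hM⟩ : ∃ d, Γᶜ.neighborFinset b = {d} := card_eq_one.mp <| by
    have := degree_add_degree_compl (G := Γ) b
    rw [card_neighborFinset_eq_degree]
    omega
  have hba : Γ.Adj b a := by simp [← mem_neighborFinset, hN]
  have hbc : Γ.Adj b c := by simp [← mem_neighborFinset, hN]
  have hbd : Γᶜ.Adj b d := by simp [← mem_neighborFinset, hM]
  have hcover : ∀ v, v = a ∨ v = b ∨ v = c ∨ v = d := fun v ↦ by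
    rcases eq_or_ne b v with rfl | hbv
    · tauto
    by_cases hv : Γ.Adj b v
    · rw [← mem_neighborFinset, hN, mem_insert, mem_singleton] at hv
      tauto
    · have hv : v ∈ Γᶜ.neighborFinset b := by simp [hbv, hv]
      rw [hM, mem_singleton] at hv
      tauto
  obtain ⟨w, hdw⟩ : ∃ w, Γ.Adj d w := by
    have := degree_add_degree_compl (G := Γ) d
    have := hdegc d
    exact (Γ.degree_pos_iff_exists_adj d).mp (by omega)
  rcases hcover w with rfl | rfl | rfl | rfl
  · exact hΓ.false_of_spanning_path hbc.symm hba hdw.symm hac.symm hbd.ne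
      fun v ↦ by have := hcover v; tauto
  · exact ((compl_adj Γ _ _).mp hbd).2 hdw.symm
  · exact hΓ.false_of_spanning_path hba.symm hbc hdw.symm hac hbd.ne hcover
  · exact hdw.ne rfl

/-- If `Γ` is a minimal prime graph that is self-complementary, then `Γ` is isomorphic to
the 5-cycle `C₅`. -/
theorem stmt13 {V : Type} [Fintype V] (Γ : SimpleGraph V)
    (hΓ : IsMPG Γ) (hsc : Nonempty (Γ ≃g Γᶜ)) :
    Nonempty (Γ ≃g cycleGraph 5) := by
  classical
  obtain ⟨φ⟩ := hsc
  have hGc : Γᶜ.CliqueFree 3 := hΓ.2.2.1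
  have hG : Γ.CliqueFree 3 := hGc.comap φ.toEmbedding.isContained
  have hE : 2 * #Γ.edgeFinset = (Fintype.card V).choose 2 := by
    rw [← card_edgeFinset_add_card_edgeFinset_compl (G := Γ), φ.card_edgeFinset_eq, two_mul]
  have : Nonempty V := Fintype.card_pos_iff.mp (by have := hΓ.1; omega)
  have hle := card_le_five_of_cliqueFree (G := Γ) hG hGc
  obtain h4 | h5 : Fintype.card V = 4 ∨ Fintype.card V = 5 := by
    have := hΓ.1
    rw [Nat.choose_two_right] at hE
    interval_cases Fintype.card V <;> omega
  · exact (hΓ.false_of_card_eq_four hG h4 (by rw [h4, Nat.choose_two_right] at hE; omega)).elim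
  · obtain ⟨f, hadj, hcadj⟩ := exists_pentagon_of_cliqueFree hG hGc h5
    exact nonempty_iso_cycleGraph_five_of_pentagon h5 f hadj hcadj
end

section
/- If Γ is a minimal prime graph, then the chromatic number of the complement of Γ is exactly 3. -/
/-!
Γᶜ is 3-colorable, so it suffices to rule out a 2-coloring `c` of Γᶜ. Connectivity of Γ yields an
edge `ab` of Γ with `c a ≠ c b` (if `c` is constant, Γᶜ has no edges and any coloring will do).
Then `c` still colors the complement of Γ minus `ab`, which, being 2-colorable, is triangle-free
and 3-colorable, against minimality.
-/

open SimpleGraph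

namespace SimpleGraph

variable {V α : Type*} {G : SimpleGraph V}

theorem Preconnected.exists_adj_apply_ne (hG : G.Preconnected) (f : V → α) {u v : V}
    (huv : f u ≠ f v) : ∃ a b, G.Adj a b ∧ f a ≠ f b := by
  obtain ⟨p⟩ := hG u v
  obtain ⟨d, -, hd, hd'⟩ := p.exists_boundary_dart {x | f x = f u} rfl huv.symm
  exact ⟨d.fst, d.snd, d.adj, fun h => hd' (h.symm.trans hd)⟩

theorem Preconnected.exists_coloring_compl_adj_ne [Nontrivial V] [Nontrivial α]
    (hG : G.Preconnected) (c : Gᶜ.Coloring α) :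
    ∃ c' : Gᶜ.Coloring α, ∃ a b, G.Adj a b ∧ c' a ≠ c' b := by
  by_cases hc : ∃ u v, c u ≠ c v
  · obtain ⟨u, v, huv⟩ := hc
    exact ⟨c, hG.exists_adj_apply_ne c huv⟩
  · push Not at hc
    have hbot : ∀ x y, ¬ Gᶜ.Adj x y := fun x y hxy => c.valid hxy (hc x y)
    obtain ⟨a, -⟩ := exists_pair_ne V
    obtain ⟨b, hab⟩ := hG.exists_adj_of_nontrivial a
    obtain ⟨i, j, hij⟩ := exists_pair_ne α
    classical
    refine ⟨Coloring.mk (fun x => if x = a then i else j)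
      fun {x y} hxy => (hbot x y hxy).elim, a, b, hab, ?_⟩
    simpa [Coloring.mk, hab.ne.symm] using hij

theorem Coloring.colorable_compl_deleteEdges {n : ℕ} (c : Gᶜ.Coloring (Fin n)) {a b : V}
    (hab : c a ≠ c b) : (G.deleteEdges {s(a, b)})ᶜ.Colorable n := by
  refine ⟨Coloring.mk c fun {x y} hxy => ?_⟩
  rw [compl_adj, deleteEdges_adj, Set.mem_singleton_iff] at hxy
  by_cases hG : G.Adj x y
  · obtain ⟨rfl, rfl⟩ | ⟨rfl, rfl⟩ := Sym2.eq_iff.mp (not_not.mp (hxy.2 ∘ And.intro hG))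
    exacts [hab, hab.symm]
  · exact c.valid ((compl_adj G x y).mpr ⟨hxy.1, hG⟩)

end SimpleGraph

theorem IsMPG.not_colorable_two {V : Type} [Fintype V] {Γ : SimpleGraph V} (h : IsMPG Γ) :
    ¬ Γᶜ.Colorable 2 := by
  obtain ⟨hcard, hconn, -, -, hmin⟩ := h
  rintro ⟨c⟩
  have : Nontrivial V := Fintype.one_lt_card_iff_nontrivial.mp hcard
  obtain ⟨c', a, b, hab, hc'⟩ := hconn.preconnected.exists_coloring_compl_adj_ne c
  have hcol := c'.colorable_compl_deleteEdges hc'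
  exact hmin s(a, b) hab ⟨hcol.cliqueFree (by norm_num), hcol.mono (by norm_num)⟩

/-- If `Γ` is a minimal prime graph, then the chromatic number of its complement is
exactly 3. -/
theorem stmt18 {V : Type} [Fintype V] (Γ : SimpleGraph V) (h : IsMPG Γ) :
    Γᶜ.chromaticNumber = 3 :=
  chromaticNumber_eq_iff_colorable_not_colorable.mpr ⟨h.2.2.2.1, h.not_colorable_two⟩
end

section
/- A finite simple graph Γ with at least two vertices is a minimal prime graph if and only if its complement is a maximal triangle-free, 3-colorable graph whose chromatic number is exactly 3. -/
open SimpleGraph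

/-- A maximal triangle-free, 3-colorable graph: triangle-free and 3-colorable, and adding
any edge yields a graph with a triangle or that is not 3-colorable. -/
def IsMaxTF3C {V : Type} [Fintype V] (H : SimpleGraph V) : Prop :=
  H.CliqueFree 3 ∧ H.Colorable 3 ∧
    ∀ v w : V, v ≠ w → ¬ H.Adj v w →
      ¬((H ⊔ fromEdgeSet {s(v, w)}).CliqueFree 3 ∧
        (H ⊔ fromEdgeSet {s(v, w)}).Colorable 3)

/-!
Deleting an edge `e` from `Γ` is the same as adding `e` to `Γᶜ`, so `Γ` is a minimal prime graph
exactly when `Γ` is connected and `Γᶜ` is maximal triangle-free 3-colorable. It remains to see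
that, for such `Γᶜ`, connectivity of `Γ` is equivalent to `Γᶜ` not being bipartite.
-/

namespace SimpleGraph

variable {V α : Type*} {G : SimpleGraph V}

theorem compl_deleteEdges (s : Set (Sym2 V)) : (G.deleteEdges s)ᶜ = Gᶜ ⊔ fromEdgeSet s := by
  rw [deleteEdges, compl_sdiff, himp_eq, sup_comm]

theorem forall_mem_edgeSet_compl_deleteEdges_iff (P : SimpleGraph V → Prop) :
    (∀ e ∈ G.edgeSet, P (G.deleteEdges {e})ᶜ) ↔
      ∀ v w, v ≠ w → ¬Gᶜ.Adj v w → P (Gᶜ ⊔ edge v w) := by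
  simp only [compl_deleteEdges, compl_adj, not_and, not_not]
  constructor
  · intro h v w hne hadj
    exact h s(v, w) (hadj hne)
  · intro h e he
    induction e using Sym2.ind with
    | _ v w => exact h v w he.ne fun _ => he

def Coloring.supEdge (C : G.Coloring α) {v w : V} (h : C v ≠ C w) : (G ⊔ edge v w).Coloring α :=
  Coloring.mk C <| by
    rintro a b (hab | hab)
    · exact C.valid hab
    · obtain ⟨⟨rfl, rfl⟩ | ⟨rfl, rfl⟩, -⟩ := (edge_adj ..).1 hab
      exacts [h, h.symm]

theorem Reachable.apply_eq_of_forall_adj {f : V → α} (hf : ∀ ⦃x y⦄, G.Adj x y → f x = f y)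
    {u v : V} (h : G.Reachable u v) : f u = f v := by
  obtain ⟨p⟩ := h
  induction p with
  | nil => rfl
  | cons hadj _ ih => exact (hf hadj).trans ih

theorem compl_adj_of_not_reachable {u v : V} (h : ¬G.Reachable u v) : Gᶜ.Adj u v :=
  ⟨fun huv => h (huv ▸ Reachable.refl u), fun hadj => h hadj.reachable⟩

/-- If `G` is disconnected and `Gᶜ` is triangle-free, then "reachable from `v`" 2-colors `Gᶜ`:
two vertices on the same side that are adjacent in `Gᶜ` would form a triangle in `Gᶜ` with any
vertex of another component. -/
theorem colorable_two_compl_of_not_preconnected (hcf : Gᶜ.CliqueFree 3) (h : ¬G.Preconnected) :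
    Gᶜ.Colorable 2 := by
  classical
  obtain ⟨v, w, hvw⟩ : ∃ v w, ¬G.Reachable v w := by simpa [Preconnected] using h
  refine (Coloring.mk (fun x => decide (G.Reachable v x)) ?_).colorable
  intro a b hab hcolor
  obtain ⟨u, hau, hbu⟩ : ∃ u, ¬G.Reachable a u ∧ ¬G.Reachable b u := by
    by_cases hva : G.Reachable v a
    · have hvb : G.Reachable v b := by simpa [hva] using hcolor
      exact ⟨w, fun h => hvw (hva.trans h), fun h => hvw (hvb.trans h)⟩
    · have hvb : ¬G.Reachable v b := by simpa [hva] using hcolor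
      exact ⟨v, fun h => hva h.symm, fun h => hvb h.symm⟩
  exact hcf {a, b, u} <| is3Clique_triple_iff.2
    ⟨hab, compl_adj_of_not_reachable hau, compl_adj_of_not_reachable hbu⟩

theorem connected_of_not_colorable_two_compl [Nonempty V] (hcf : Gᶜ.CliqueFree 3)
    (h : ¬Gᶜ.Colorable 2) : G.Connected :=
  ⟨not_not.1 fun hG => h (colorable_two_compl_of_not_preconnected hcf hG)⟩

end SimpleGraph

section

variable {V : Type} [Fintype V]

theorem isMPG_iff (Γ : SimpleGraph V) :
    IsMPG Γ ↔ 2 ≤ Fintype.card V ∧ Γ.Connected ∧ IsMaxTF3C Γᶜ := by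
  simp only [IsMPG, IsMaxTF3C, forall_mem_edgeSet_compl_deleteEdges_iff
    fun H => ¬(H.CliqueFree 3 ∧ H.Colorable 3), edge]

theorem IsMaxTF3C.eq_of_adj {G : SimpleGraph V} (hmax : IsMaxTF3C Gᶜ)
    (C : Gᶜ.Coloring (Fin 2)) {v w : V} (h : G.Adj v w) : C v = C w := by
  by_contra hne
  have hcol : (Gᶜ ⊔ edge v w).Colorable 2 := by simpa using (C.supEdge hne).colorable
  exact hmax.2.2 v w h.ne (fun h' => h'.2 h)
    ⟨hcol.cliqueFree (by norm_num), hcol.mono (by norm_num : 2 ≤ 3)⟩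

/-- A 2-coloring of `Gᶜ` is constant along the edges of the connected graph `G`, so `G` is
complete; but then two distinct vertices may be colored apart, and joining them in `Gᶜ` keeps it
bipartite. -/
theorem IsMaxTF3C.not_colorable_two [Nontrivial V] {G : SimpleGraph V} (hmax : IsMaxTF3C Gᶜ)
    (hconn : G.Preconnected) : ¬Gᶜ.Colorable 2 := by
  rintro ⟨C⟩
  have hbot : Gᶜ = ⊥ := by
    ext a b
    simpa using fun hab =>
      C.valid hab ((hconn a b).apply_eq_of_forall_adj fun _ _ => hmax.eq_of_adj C)
  obtain ⟨v, w, hvw⟩ := exists_pair_ne V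
  classical
  let C' : Gᶜ.Coloring (Fin 2) := Coloring.mk (fun x => if x = v then 0 else 1) (by simp [hbot])
  have hsplit : C' v ≠ C' w := by simp [C', Coloring.mk, hvw.symm]
  exact hsplit (hmax.eq_of_adj C' (by simp [compl_eq_bot.1 hbot, hvw]))

end

/-- A finite simple graph with at least two vertices is a minimal prime graph if and only
if its complement is a maximal triangle-free, 3-colorable graph with chromatic number
exactly 3. -/
theorem stmt19 {V : Type} [Fintype V] (Γ : SimpleGraph V) (hV : 2 ≤ Fintype.card V) :
    IsMPG Γ ↔ (IsMaxTF3C Γᶜ ∧ Γᶜ.chromaticNumber = 3) := by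
  have : Nontrivial V := Fintype.one_lt_card_iff_nontrivial.1 hV
  have hχ : Γᶜ.chromaticNumber = 3 ↔ Γᶜ.Colorable 3 ∧ ¬Γᶜ.Colorable 2 :=
    chromaticNumber_eq_iff_colorable_not_colorable (n := 2)
  rw [isMPG_iff, hχ]
  constructor
  · rintro ⟨-, hconn, hmax⟩
    exact ⟨hmax, hmax.2.1, hmax.not_colorable_two hconn.preconnected⟩
  · rintro ⟨hmax, -, hnot⟩
    exact ⟨hV, connected_of_not_colorable_two_compl hmax.1 hnot, hmax⟩
end
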